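/- Quasi-isometry for D_s: if f, g ∈ Λ are both homogeneous of degree d, then ⟨D_s f, D_s g⟩_s = d · ⟨f, g⟩. -/

import Mathlib

open MvPolynomial

/-- The ring of symmetric functions in the power-sum model:
`Λ = ℚ[p₁, p₂, …]` with the variable indexed by `n : ℕ+` being the power sum `pₙ`. -/
abbrev Λ : Type := MvPolynomial ℕ+ ℚ

/-- `Λ[1^s, 2^s, …]`: the monoid algebra of the multiplicative monoid `ℕ+` over `Λ`,
with elements the finite sums `Σ_k f_k · k^s`, where `k^s · h^s = (kh)^s`. -/
abbrev ΛS : Type := MonoidAlgebra Λ ℕ+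

/-- `Dₙ = n · ∂/∂pₙ`. -/
noncomputable def Dn (n : ℕ+) : Λ →ₗ[ℚ] Λ :=
  (n : ℚ) • (pderiv n : Derivation ℚ Λ Λ).toLinearMap

/-- `D_s(f) = Σₙ (Dₙ f) · n^s` (only finitely many terms are nonzero). -/
noncomputable def Ds (f : Λ) : ΛS := ∑ᶠ n : ℕ+, MonoidAlgebra.single n (Dn n f)

/-- The weight `|λ| = Σₙ n·(λ n)` of a power-sum monomial exponent. -/
def wt (l : ℕ+ →₀ ℕ) : ℕ := l.sum fun n k => (n : ℕ) * k

/-- `f` is homogeneous of degree `d` if every monomial in its support has weight `d`. -/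
def IsHomog (d : ℕ) (f : Λ) : Prop := ∀ l ∈ f.support, wt l = d

/-- `z_λ = Πₙ n^{λ n} · (λ n)!`. -/
noncomputable def zlam (l : ℕ+ →₀ ℕ) : ℚ :=
  l.prod fun n k => (n : ℚ) ^ k * (Nat.factorial k : ℚ)

/-- The Hall inner product: the unique bilinear form with `⟨p_λ, p_μ⟩ = δ_{λμ} z_λ`. -/
noncomputable def hall (f g : Λ) : ℚ := ∑ l ∈ f.support, f.coeff l * g.coeff l * zlam l

/-- The generalized Hall product on `Λ[1^s, 2^s, …]`, determined by
`⟨f·h^s, g·k^s⟩_s = δ_{hk} ⟨f, g⟩`. -/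
noncomputable def halls (A B : ΛS) : ℚ := ∑ k ∈ A.coeff.support, hall (A.coeff k) (B.coeff k)

/-!
`Dₙ` lowers the exponent of `pₙ` in `p_λ` by one and multiplies by `n · λₙ`, while `z_λ` gains
exactly the factor `n · λₙ` when that exponent is raised by one. Hence
`⟨Dₙ f, Dₙ g⟩ = Σ_λ n λₙ f_λ g_λ z_λ`, and summing over `n` turns the weight `n λₙ` into
`|λ| = d`.
-/

lemma coeff_Dn (n : ℕ+) (f : Λ) (l : ℕ+ →₀ ℕ) :
    coeff l (Dn n f) = n * (l n + 1) * coeff (l + Finsupp.single n 1) f := by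
  simp only [Dn, LinearMap.smul_apply, Derivation.coeFn_coe, coeff_smul, smul_eq_mul,
    coeff_pderiv]
  ring

lemma Dn_eq_zero_of_notMem_vars {n : ℕ+} {f : Λ} (h : n ∉ f.vars) : Dn n f = 0 := by
  simp [Dn, pderiv_eq_zero_of_notMem_vars h]

lemma coeff_Ds (f : Λ) (k : ℕ+) : (Ds f).coeff k = Dn k f := by
  have hsupp : (Function.support fun n => MonoidAlgebra.single n (Dn n f)) ⊆ f.vars := by
    intro n hn
    by_contra h
    exact hn (by simp [Dn_eq_zero_of_notMem_vars h])
  rw [Ds, finsum_eq_sum_of_support_subset _ hsupp, MonoidAlgebra.coeff_sum, Finset.sum_apply',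
    Finset.sum_eq_single k]
  · simp [MonoidAlgebra.coeff_single]
  · intro n _ hn
    simp [MonoidAlgebra.coeff_single, hn]
  · intro hk
    simp [Dn_eq_zero_of_notMem_vars hk]

lemma zlam_add_single (l : ℕ+ →₀ ℕ) (n : ℕ+) :
    zlam (l + Finsupp.single n 1) = n * (l n + 1) * zlam l := by
  have h0 : ∀ i : ℕ+, (i : ℚ) ^ 0 * (Nat.factorial 0 : ℚ) = 1 := by simp
  rw [zlam, zlam, ← Finsupp.mul_prod_erase' _ n _ h0, ← Finsupp.mul_prod_erase' l n _ h0]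
  simp only [Finsupp.erase_add, Finsupp.erase_single, add_zero, Finsupp.add_apply,
    Finsupp.single_eq_same, pow_succ, Nat.factorial_succ]
  push_cast
  ring

lemma wt_eq_sum_of_support_subset {l : ℕ+ →₀ ℕ} {T : Finset ℕ+} (hT : l.support ⊆ T) :
    (wt l : ℚ) = ∑ k ∈ T, (k : ℚ) * l k := by
  rw [wt, Finsupp.sum_of_support_subset l hT _ (by simp)]
  push_cast
  rfl

lemma hall_eq_sum_of_support_subset {f : Λ} (g : Λ) {T : Finset (ℕ+ →₀ ℕ)}
    (hT : f.support ⊆ T) : hall f g = ∑ l ∈ T, f.coeff l * g.coeff l * zlam l :=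
  Finset.sum_subset hT fun l _ hl => by simp [notMem_support_iff.1 hl]

lemma halls_eq_sum_of_support_subset {A : ΛS} (B : ΛS) {T : Finset ℕ+}
    (hT : A.coeff.support ⊆ T) : halls A B = ∑ k ∈ T, hall (A.coeff k) (B.coeff k) :=
  Finset.sum_subset hT fun k _ hk => by simp [Finsupp.notMem_support_iff.1 hk, hall]

lemma hall_Dn (n : ℕ+) (f g : Λ) :
    hall (Dn n f) (Dn n g) = ∑ m ∈ f.support, n * m n * (f.coeff m * g.coeff m * zlam m) := by
  set e : ℕ+ →₀ ℕ := Finsupp.single n 1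
  have hinj : Set.InjOn (· + e) ((· + e) ⁻¹' f.support) := (add_left_injective e).injOn
  have hsupp : (Dn n f).support ⊆ f.support.preimage (· + e) hinj := by
    intro l hl
    simp_all [coeff_Dn, e]
  rw [hall_eq_sum_of_support_subset _ hsupp, ← Finset.sum_preimage (· + e) f.support hinj]
  · refine Finset.sum_congr rfl fun l _ => ?_
    simp only [coeff_Dn, zlam_add_single, e, Finsupp.add_apply, Finsupp.single_eq_same]
    push_cast
    ring
  · intro m _ hm
    have : m n = 0 := by
      by_contra h
      exact hm ⟨m - e, tsub_add_cancel_of_le (Finsupp.single_le_iff.2 (Nat.one_le_iff_ne_zero.2 h))⟩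
    simp [this]

theorem Ds_quasi_isometry_general (d : ℕ) (f g : Λ) (hf : IsHomog d f) :
    halls (Ds f) (Ds g) = (d : ℚ) * hall f g := by
  have hsupp : (Ds f).coeff.support ⊆ f.vars := fun k hk => by
    by_contra h
    exact Finsupp.mem_support_iff.1 hk (by rw [coeff_Ds, Dn_eq_zero_of_notMem_vars h])
  have hwt : ∀ m ∈ f.support, (d : ℚ) = ∑ k ∈ f.vars, (k : ℚ) * m k := fun m hm => by
    rw [← hf m hm, wt_eq_sum_of_support_subset (support_subset_vars_of_mem_support hm)]
  calc halls (Ds f) (Ds g) = ∑ k ∈ f.vars, hall (Dn k f) (Dn k g) := by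
        simp only [halls_eq_sum_of_support_subset _ hsupp, coeff_Ds]
    _ = ∑ m ∈ f.support, (∑ k ∈ f.vars, (k : ℚ) * m k) * (f.coeff m * g.coeff m * zlam m) := by
        simp only [hall_Dn, Finset.sum_mul]
        exact Finset.sum_comm
    _ = d * hall f g := by
        rw [hall, Finset.mul_sum]
        exact Finset.sum_congr rfl fun m hm => by rw [hwt m hm]

/-- Quasi-isometry for `D_s`: for `f, g` homogeneous of degree `d`,
`⟨D_s f, D_s g⟩_s = d ⟨f, g⟩`. -/
theorem Ds_quasi_isometry (d : ℕ) (f g : Λ) (hf : IsHomog d f) (hg : IsHomog d g) :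
    halls (Ds f) (Ds g) = (d : ℚ) * hall f g :=
  Ds_quasi_isometry_general d f g hf
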